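/- arXiv:math/0409197 — 3 statements merged into one kernel-verified Lean document; each statement's English description precedes it below -/
import Mathlib

section
/- For any parameter θ = (α_1, a_1, b_1, …, α_M, a_M, b_M) ∈ Θ there exists a parameter θ' = (α_1, a_1', b_1', …, α_M, a_M', b_M') ∈ Θ with the same mixing weights, satisfying L_min ≤ a_m' ≤ L_max and 0 < b_m' ≤ L for all m, such that Σ_{m=1}^M α_m f(x; a_m', b_m') ≥ Σ_{m=1}^M α_m f(x; a_m, b_m) for all x ∈ [L_min, L_max); moreover equality (for all x ∈ [L_min, L_max)) does not hold if there exists m with α_m > 0 such that a_m ∉ [L_min, L_max] or b_m > L. -/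
/-!
Replace every component by the uniform density on its support `[a - b, a + b)` intersected with
`[L_min, L_max)`, or on all of `[L_min, L_max)` when that intersection is empty. Shrinking a
support can only raise the density on it, so the mixture does not decrease on `[L_min, L_max)`.
A component with positive weight that sticks out of the box or is wider than `L` has its
support shrunk strictly (or moved to where it vanished), so there the mixture increases strictly.
-/

open MeasureTheory Set

/-- The uniform density with center `a` and half-width `b`, supported on `[a - b, a + b)`. -/
noncomputable def unifPdf (a b x : ℝ) : ℝ :=
  if a - b ≤ x ∧ x < a + b then 1 / (2 * b) else 0

/-- Mixture of `M` uniform densities; `θ (m, 0)` is `α_m`, `θ (m, 1)` is `a_m`,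
`θ (m, 2)` is `b_m`. -/
noncomputable def mixPdf (M : ℕ) (θ : EuclideanSpace ℝ (Fin M × Fin 3)) (x : ℝ) : ℝ :=
  ∑ m : Fin M, θ (m, 0) * unifPdf (θ (m, 1)) (θ (m, 2)) x

/-- The parameter space `Θ`. -/
def mixParams (M : ℕ) : Set (EuclideanSpace ℝ (Fin M × Fin 3)) :=
  {θ | (∀ m, 0 ≤ θ (m, 0)) ∧ (∑ m : Fin M, θ (m, 0)) = 1 ∧ ∀ m, 0 < θ (m, 2)}

noncomputable def clippedSupport (l u a b : ℝ) : ℝ × ℝ :=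
  if max (a - b) l < min (a + b) u then (max (a - b) l, min (a + b) u) else (l, u)

noncomputable def clipCenter (l u a b : ℝ) : ℝ :=
  ((clippedSupport l u a b).1 + (clippedSupport l u a b).2) / 2

noncomputable def clipHalfWidth (l u a b : ℝ) : ℝ :=
  ((clippedSupport l u a b).2 - (clippedSupport l u a b).1) / 2

lemma unifPdf_midpoint (c d x : ℝ) :
    unifPdf ((c + d) / 2) ((d - c) / 2) x = if c ≤ x ∧ x < d then 1 / (d - c) else 0 := by
  have hl : (c + d) / 2 - (d - c) / 2 = c := by ring
  have hr : (c + d) / 2 + (d - c) / 2 = d := by ring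
  have hw : 2 * ((d - c) / 2) = d - c := by ring
  rw [unifPdf, hl, hr, hw]

section Clip

variable {l u a b x : ℝ}

lemma clippedSupport_bounds (hlu : l < u) :
    l ≤ (clippedSupport l u a b).1 ∧ (clippedSupport l u a b).1 < (clippedSupport l u a b).2 ∧
      (clippedSupport l u a b).2 ≤ u := by
  unfold clippedSupport
  split_ifs with h
  · exact ⟨le_max_right _ _, h, min_le_right _ _⟩
  · exact ⟨le_rfl, hlu, le_rfl⟩

lemma unifPdf_le_unifPdf_clippedSupport (hx : x ∈ Ico l u) :
    unifPdf a b x ≤ unifPdf (clipCenter l u a b) (clipHalfWidth l u a b) x := by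
  rw [clipCenter, clipHalfWidth, unifPdf_midpoint]
  by_cases hold : a - b ≤ x ∧ x < a + b
  · have hc : max (a - b) l ≤ x := max_le hold.1 hx.1
    have hd : x < min (a + b) u := lt_min hold.2 hx.2
    have hwidth : min (a + b) u - max (a - b) l ≤ 2 * b := by
      linarith [le_max_left (a - b) l, min_le_left (a + b) u]
    rw [clippedSupport, if_pos (hc.trans_lt hd), unifPdf, if_pos hold, if_pos ⟨hc, hd⟩]
    gcongr
    linarith
  · rw [unifPdf, if_neg hold]
    split_ifs with hnew
    · exact one_div_nonneg.mpr (by linarith)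
    · exact le_rfl

/-- The witness is the left end of the clipped support, or `l` when `unifPdf a b` vanishes on
`[l, u)`. -/
lemma exists_unifPdf_lt_unifPdf_clippedSupport (hb : 0 < b) (hlu : l < u)
    (hout : a ∉ Icc l u ∨ u - l < b) :
    ∃ x ∈ Ico l u, unifPdf a b x <
      unifPdf (clipCenter l u a b) (clipHalfWidth l u a b) x := by
  simp only [clipCenter, clipHalfWidth, unifPdf_midpoint, clippedSupport]
  by_cases hcd : max (a - b) l < min (a + b) u
  · have hwidth : min (a + b) u - max (a - b) l < 2 * b := by
      rcases hout with hout | hout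
      · rcases not_and_or.mp hout with hout | hout
        · linarith [max_eq_right (by linarith [not_le.mp hout] : a - b ≤ l), min_le_left (a + b) u]
        · linarith [min_eq_right (by linarith [not_le.mp hout] : u ≤ a + b), le_max_left (a - b) l]
      · linarith [le_max_right (a - b) l, min_le_right (a + b) u]
    refine ⟨max (a - b) l, ⟨le_max_right _ _, hcd.trans_le (min_le_right _ _)⟩, ?_⟩
    rw [unifPdf, if_pos ⟨le_max_left _ _, hcd.trans_le (min_le_left _ _)⟩, if_pos hcd,
      if_pos ⟨le_rfl, hcd⟩]
    gcongr
  · refine ⟨l, ⟨le_rfl, hlu⟩, ?_⟩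
    have hold : ¬(a - b ≤ l ∧ l < a + b) := fun h =>
      hcd ((max_eq_right h.1).trans_lt (lt_min h.2 hlu))
    rw [unifPdf, if_neg hold, if_neg hcd, if_pos ⟨le_rfl, hlu⟩]
    exact one_div_pos.mpr (by linarith)

end Clip

noncomputable def clipParam {M : ℕ} (l u : ℝ) (θ : EuclideanSpace ℝ (Fin M × Fin 3)) :
    EuclideanSpace ℝ (Fin M × Fin 3) :=
  WithLp.toLp 2 fun mi =>
    ![θ (mi.1, 0), clipCenter l u (θ (mi.1, 1)) (θ (mi.1, 2)),
      clipHalfWidth l u (θ (mi.1, 1)) (θ (mi.1, 2))] mi.2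

section ClipParam

variable {M : ℕ} {l u x : ℝ} {θ : EuclideanSpace ℝ (Fin M × Fin 3)}

lemma clipParam_apply_one (m : Fin M) :
    clipParam l u θ (m, 1) = clipCenter l u (θ (m, 1)) (θ (m, 2)) := rfl

lemma clipParam_apply_two (m : Fin M) :
    clipParam l u θ (m, 2) = clipHalfWidth l u (θ (m, 1)) (θ (m, 2)) := rfl

lemma clipParam_mem_box (hlu : l < u) (m : Fin M) :
    l ≤ clipParam l u θ (m, 1) ∧ clipParam l u θ (m, 1) ≤ u ∧
      0 < clipParam l u θ (m, 2) ∧ clipParam l u θ (m, 2) ≤ u - l := by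
  obtain ⟨hl, hcd, hu⟩ := clippedSupport_bounds (a := θ (m, 1)) (b := θ (m, 2)) hlu
  rw [clipParam_apply_one, clipParam_apply_two, clipCenter, clipHalfWidth]
  refine ⟨?_, ?_, ?_, ?_⟩ <;> linarith

lemma clipParam_mem_mixParams (hθ : θ ∈ mixParams M) (hlu : l < u) :
    clipParam l u θ ∈ mixParams M :=
  ⟨hθ.1, hθ.2.1, fun m => (clipParam_mem_box hlu m).2.2.1⟩

lemma mixPdf_le_mixPdf_clipParam (hα : ∀ m, 0 ≤ θ (m, 0)) (hx : x ∈ Ico l u) :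
    mixPdf M θ x ≤ mixPdf M (clipParam l u θ) x :=
  Finset.sum_le_sum fun m _ =>
    mul_le_mul_of_nonneg_left (unifPdf_le_unifPdf_clippedSupport hx) (hα m)

lemma mixPdf_lt_mixPdf_clipParam (hα : ∀ m, 0 ≤ θ (m, 0)) (hx : x ∈ Ico l u) {m : Fin M}
    (hαm : 0 < θ (m, 0))
    (hlt : unifPdf (θ (m, 1)) (θ (m, 2)) x <
      unifPdf (clipParam l u θ (m, 1)) (clipParam l u θ (m, 2)) x) :
    mixPdf M θ x < mixPdf M (clipParam l u θ) x :=
  Finset.sum_lt_sum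
    (fun i _ => mul_le_mul_of_nonneg_left (unifPdf_le_unifPdf_clippedSupport hx) (hα i))
    ⟨m, Finset.mem_univ m, mul_lt_mul_of_pos_left hlt hαm⟩

end ClipParam

theorem exists_dominating_param_in_box_general
    (M : ℕ) (θ₀ : EuclideanSpace ℝ (Fin M × Fin 3))
    (hθ₀ : θ₀ ∈ mixParams M)
    (Lmin Lmax L : ℝ)
    (hLmin : IsLeast (Set.range fun m : Fin M => θ₀ (m, 1) - θ₀ (m, 2)) Lmin)
    (hLmax : IsGreatest (Set.range fun m : Fin M => θ₀ (m, 1) + θ₀ (m, 2)) Lmax)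
    (hL : L = Lmax - Lmin)
    (θ : EuclideanSpace ℝ (Fin M × Fin 3)) (hθ : θ ∈ mixParams M) :
    ∃ θ' ∈ mixParams M,
      (∀ m : Fin M, θ' (m, 0) = θ (m, 0)) ∧
      (∀ m : Fin M, Lmin ≤ θ' (m, 1) ∧ θ' (m, 1) ≤ Lmax ∧
        0 < θ' (m, 2) ∧ θ' (m, 2) ≤ L) ∧
      (∀ x ∈ Set.Ico Lmin Lmax, mixPdf M θ x ≤ mixPdf M θ' x) ∧
      ((∃ m : Fin M, 0 < θ (m, 0) ∧
          (θ (m, 1) ∉ Set.Icc Lmin Lmax ∨ L < θ (m, 2))) →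
        ¬ ∀ x ∈ Set.Ico Lmin Lmax, mixPdf M θ' x = mixPdf M θ x) := by
  obtain ⟨hα, hsum, hb⟩ := hθ
  obtain ⟨m₀⟩ : Nonempty (Fin M) := by
    by_contra hempty
    simp [not_nonempty_iff.mp hempty] at hsum
  have hlu : Lmin < Lmax := by
    linarith [hLmin.2 ⟨m₀, rfl⟩, hLmax.2 ⟨m₀, rfl⟩, hθ₀.2.2 m₀]
  subst hL
  refine ⟨clipParam Lmin Lmax θ, clipParam_mem_mixParams ⟨hα, hsum, hb⟩ hlu, fun m => rfl,
    clipParam_mem_box hlu, fun x hx => mixPdf_le_mixPdf_clipParam hα hx, ?_⟩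
  rintro ⟨m, hαm, hout⟩ heq
  obtain ⟨x, hx, hlt⟩ := exists_unifPdf_lt_unifPdf_clippedSupport (hb m) hlu hout
  exact (mixPdf_lt_mixPdf_clipParam hα hx hαm hlt).ne' (heq x hx)

/-- **Lemma 1:** for any `θ ∈ Θ` there is `θ' ∈ Θ` with the same mixing weights,
with `L_min ≤ a_m' ≤ L_max` and `0 < b_m' ≤ L`, whose density dominates that of `θ`
on `[L_min, L_max)`; equality on all of `[L_min, L_max)` fails whenever some component
with positive weight has `a_m ∉ [L_min, L_max]` or `b_m > L`. -/
theorem exists_dominating_param_in_box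
    (M : ℕ) (hM : 0 < M) (θ₀ : EuclideanSpace ℝ (Fin M × Fin 3))
    (hθ₀ : θ₀ ∈ mixParams M)
    (Lmin Lmax L : ℝ)
    (hLmin : IsLeast (Set.range fun m : Fin M => θ₀ (m, 1) - θ₀ (m, 2)) Lmin)
    (hLmax : IsGreatest (Set.range fun m : Fin M => θ₀ (m, 1) + θ₀ (m, 2)) Lmax)
    (hL : L = Lmax - Lmin)
    (θ : EuclideanSpace ℝ (Fin M × Fin 3)) (hθ : θ ∈ mixParams M) :
    ∃ θ' ∈ mixParams M,
      (∀ m : Fin M, θ' (m, 0) = θ (m, 0)) ∧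
      (∀ m : Fin M, Lmin ≤ θ' (m, 1) ∧ θ' (m, 1) ≤ Lmax ∧
        0 < θ' (m, 2) ∧ θ' (m, 2) ≤ L) ∧
      (∀ x ∈ Set.Ico Lmin Lmax, mixPdf M θ x ≤ mixPdf M θ' x) ∧
      ((∃ m : Fin M, 0 < θ (m, 0) ∧
          (θ (m, 1) ∉ Set.Icc Lmin Lmax ∨ L < θ (m, 2))) →
        ¬ ∀ x ∈ Set.Ico Lmin Lmax, mixPdf M θ' x = mixPdf M θ x) :=
  exists_dominating_param_in_box_general M θ₀ hθ₀ Lmin Lmax L hLmin hLmax hL θ hθ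
end

section
/- (Okamoto) Let Z be a random variable with the binomial distribution Bin(n, p). Then for every δ > 0, Prob(Z/n − p ≥ δ) < exp(−2nδ²). -/
open MeasureTheory ProbabilityTheory Real Finset

/-!
Chernoff's method. For `t ≥ 0` the binomial mass of `{k ≥ n (p + δ)}` is at most
`e^{-t n (p + δ)} ∑ₖ Bin(n, p){k} e^{t k} = e^{-t n (p + δ)} (p eᵗ + 1 - p)ⁿ`, and Hoeffding's
lemma for a Bernoulli variable gives `p eᵗ + 1 - p ≤ e^{t p + t² / 8}`; the choice `t = 4δ` yields
`e^{-2 n δ²}`. The inequality is strict because the atom at `0`, of mass `(1 - p)ⁿ > 0` when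
`p < 1`, lies outside the tail; for `p = 1` the tail is empty.
-/

lemma bernoulli_mgf_le {p : ℝ} (hp0 : 0 ≤ p) (hp1 : p ≤ 1) (t : ℝ) :
    p * exp t + (1 - p) ≤ exp (t * p + t ^ 2 / 8) := by
  let X : Bool → ℝ := fun b => if b then 1 else 0
  have hmean : Ber(true, false, ⟨p, hp0, hp1⟩)[X] = p := by
    simp [X, integral_bernoulliMeasure]
  have hoeffding := (hasSubgaussianMGF_of_mem_Icc (a := 0) (b := 1)
    (Measurable.of_discrete (f := X)).aemeasurable
    (ae_of_all Ber(true, false, ⟨p, hp0, hp1⟩) fun b => by cases b <;> simp [X])).mgf_le t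
  rw [mgf, integral_bernoulliMeasure, hmean] at hoeffding
  norm_num [X] at hoeffding
  have hexp_one : exp (t * p) * exp (t * (1 - p)) = exp t := by rw [← exp_add]; ring_nf
  have hexp_zero : exp (t * p) * exp (-(t * p)) = 1 := by rw [← exp_add, add_neg_cancel, exp_zero]
  calc p * exp t + (1 - p)
      = exp (t * p) * (p * exp (t * (1 - p)) + (1 - p) * exp (-(t * p))) := by
        linear_combination -p * hexp_one - (1 - p) * hexp_zero
    _ ≤ exp (t * p) * exp (1 / 4 * t ^ 2 / 2) := by gcongr
    _ = exp (t * p + t ^ 2 / 8) := by rw [← exp_add]; ring_nf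

def binomialWeight (n : ℕ) (p : ℝ) (k : ℕ) : ℝ := n.choose k * p ^ k * (1 - p) ^ (n - k)

lemma sum_binomialWeight_mul_exp (n : ℕ) (p t : ℝ) :
    ∑ k ∈ range (n + 1), binomialWeight n p k * exp (t * k) = (p * exp t + (1 - p)) ^ n := by
  rw [add_pow]
  refine sum_congr rfl fun k _ => ?_
  rw [binomialWeight, mul_comm t, exp_nat_mul, mul_pow]
  ring

section BinomialWeight

variable {n : ℕ} {p : ℝ}

lemma binomialWeight_nonneg (hp0 : 0 ≤ p) (hp1 : p ≤ 1) (k : ℕ) : 0 ≤ binomialWeight n p k := by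
  unfold binomialWeight
  have : 0 ≤ 1 - p := by linarith
  positivity

lemma sum_binomialWeight_tail_lt_chernoff {a t : ℝ} (hp0 : 0 ≤ p) (hp1 : p < 1) (ha : 0 < a)
    (ht : 0 ≤ t) :
    ∑ k ∈ (range (n + 1)).filter (fun k : ℕ => a ≤ k), binomialWeight n p k
      < exp (-(t * a)) * (p * exp t + (1 - p)) ^ n := by
  have hw := binomialWeight_nonneg (n := n) hp0 hp1.le
  calc _ ≤ ∑ k ∈ (range (n + 1)).filter (fun k : ℕ => a ≤ k),
          binomialWeight n p k * exp (t * (k - a)) := by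
        refine sum_le_sum fun k hk => le_mul_of_one_le_right (hw k) (one_le_exp ?_)
        exact mul_nonneg ht (sub_nonneg.2 (mem_filter.1 hk).2)
    _ < ∑ k ∈ range (n + 1), binomialWeight n p k * exp (t * (k - a)) := by
        refine sum_lt_sum_of_subset (filter_subset _ _) (mem_range.2 n.succ_pos) ?_ ?_
          fun k _ _ => mul_nonneg (hw k) (exp_pos _).le
        · simpa using ha
        · have : 0 < 1 - p := by linarith
          simpa [binomialWeight] using mul_pos (pow_pos this n) (exp_pos _)
    _ = exp (-(t * a)) * (p * exp t + (1 - p)) ^ n := by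
        rw [← sum_binomialWeight_mul_exp, mul_sum]
        refine sum_congr rfl fun k _ => ?_
        rw [mul_sub, sub_eq_neg_add, exp_add]
        ring

theorem sum_binomialWeight_upper_tail_lt_exp {δ : ℝ} (hn : 0 < n) (hp0 : 0 ≤ p) (hp1 : p ≤ 1)
    (hδ : 0 < δ) :
    ∑ k ∈ (range (n + 1)).filter (fun k : ℕ => δ ≤ (k : ℝ) / n - p), binomialWeight n p k
      < exp (-2 * n * δ ^ 2) := by
  have hn' : (0 : ℝ) < n := by exact_mod_cast hn
  rcases hp1.lt_or_eq with hp1 | rfl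
  · have hfilter : (range (n + 1)).filter (fun k : ℕ => δ ≤ (k : ℝ) / n - p)
        = (range (n + 1)).filter (fun k : ℕ => n * (p + δ) ≤ k) := by
      refine filter_congr fun k _ => ?_
      rw [le_sub_iff_add_le, le_div_iff₀ hn', mul_comm, add_comm]
    calc _ < exp (-(4 * δ * (n * (p + δ)))) * (p * exp (4 * δ) + (1 - p)) ^ n := by
          rw [hfilter]
          exact sum_binomialWeight_tail_lt_chernoff hp0 hp1 (by positivity) (by positivity)
      _ ≤ exp (-(4 * δ * (n * (p + δ)))) * exp (4 * δ * p + (4 * δ) ^ 2 / 8) ^ n := by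
          have : 0 ≤ 1 - p := by linarith
          gcongr
          exact bernoulli_mgf_le hp0 hp1.le _
      _ = exp (-2 * n * δ ^ 2) := by
          rw [← exp_nat_mul, ← exp_add]
          ring_nf
  · have hempty : (range (n + 1)).filter (fun k : ℕ => δ ≤ (k : ℝ) / n - 1) = ∅ := by
      refine filter_false_of_mem fun k hk => ?_
      have hk : (k : ℝ) ≤ n := by exact_mod_cast Nat.lt_succ_iff.1 (mem_range.1 hk)
      have : (k : ℝ) / n ≤ 1 := (div_le_one hn').2 hk
      linarith
    rw [hempty, sum_empty]
    exact exp_pos _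

end BinomialWeight

section NatValued

variable {Ω : Type*} [MeasurableSpace Ω] {μ : Measure Ω} {Z : Ω → ℕ} {n : ℕ}

lemma ae_le_of_measure_eq_zero (h : ∀ k, n < k → μ {ω | Z ω = k} = 0) : ∀ᵐ ω ∂μ, Z ω ≤ n := by
  have hne : ∀ᵐ ω ∂μ, ∀ k, n < k → Z ω ≠ k := ae_all_iff.2 fun k => by
    by_cases hk : n < k
    · filter_upwards [measure_eq_zero_iff_ae_notMem.1 (h k hk)] with ω hω _ using hω
    · exact ae_of_all _ fun ω hk' => absurd hk' hk
  filter_upwards [hne] with ω hω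
  exact not_lt.1 fun hlt => hω _ hlt rfl

lemma measure_le_sum_of_ae_le (hZ : ∀ᵐ ω ∂μ, Z ω ≤ n) (s : ℕ → Prop) [DecidablePred s] :
    μ {ω | s (Z ω)} ≤ ∑ k ∈ (range (n + 1)).filter s, μ {ω | Z ω = k} := by
  calc μ {ω | s (Z ω)} ≤ μ (⋃ k ∈ (range (n + 1)).filter s, {ω | Z ω = k}) := by
        refine measure_mono_ae ?_
        filter_upwards [hZ] with ω hω hs
        exact Set.mem_biUnion (mem_filter.2 ⟨mem_range.2 (Nat.lt_succ_of_le hω), hs⟩) rfl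
    _ ≤ ∑ k ∈ (range (n + 1)).filter s, μ {ω | Z ω = k} := measure_biUnion_finset_le _ _

end NatValued

theorem okamoto_inequality_general
    {Ω : Type*} [MeasurableSpace Ω] (P : Measure Ω)
    (n : ℕ) (hn : 0 < n) (p : ℝ) (hp0 : 0 ≤ p) (hp1 : p ≤ 1)
    (Z : Ω → ℕ)
    (hbin : ∀ k : ℕ, P {ω | Z ω = k}
      = ENNReal.ofReal ((n.choose k : ℝ) * p ^ k * (1 - p) ^ (n - k)))
    (δ : ℝ) (hδ : 0 < δ) :
    P {ω | δ ≤ (Z ω : ℝ) / n - p} < ENNReal.ofReal (Real.exp (-2 * n * δ ^ 2)) := by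
  have hZn : ∀ᵐ ω ∂P, Z ω ≤ n := ae_le_of_measure_eq_zero fun k hk => by
    rw [hbin, Nat.choose_eq_zero_of_lt hk]
    simp
  calc P {ω | δ ≤ (Z ω : ℝ) / n - p}
      ≤ ∑ k ∈ (range (n + 1)).filter (fun k : ℕ => δ ≤ (k : ℝ) / n - p), P {ω | Z ω = k} :=
        measure_le_sum_of_ae_le hZn _
    _ = ENNReal.ofReal (∑ k ∈ (range (n + 1)).filter (fun k : ℕ => δ ≤ (k : ℝ) / n - p),
          binomialWeight n p k) := by
        rw [ENNReal.ofReal_sum_of_nonneg fun k _ => binomialWeight_nonneg hp0 hp1 k]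
        exact sum_congr rfl fun k _ => hbin k
    _ < ENNReal.ofReal (exp (-2 * n * δ ^ 2)) := (ENNReal.ofReal_lt_ofReal_iff (exp_pos _)).2
        (sum_binomialWeight_upper_tail_lt_exp hn hp0 hp1 hδ)

/-- **Okamoto's inequality.** If `Z ~ Bin(n, p)` then for every `δ > 0`,
`Prob(Z/n − p ≥ δ) < exp(−2nδ²)`. -/
theorem okamoto_inequality
    {Ω : Type*} [MeasurableSpace Ω] (P : Measure Ω) [IsProbabilityMeasure P]
    (n : ℕ) (hn : 0 < n) (p : ℝ) (hp0 : 0 ≤ p) (hp1 : p ≤ 1)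
    (Z : Ω → ℕ) (hZ : Measurable Z)
    (hbin : ∀ k : ℕ, P {ω | Z ω = k}
      = ENNReal.ofReal ((n.choose k : ℝ) * p ^ k * (1 - p) ^ (n - k)))
    (δ : ℝ) (hδ : 0 < δ) :
    P {ω | δ ≤ (Z ω : ℝ) / n - p} < ENNReal.ofReal (Real.exp (-2 * n * δ ^ 2)) :=
  okamoto_inequality_general P n hn p hp0 hp1 Z hbin δ hδ
end

section
/- Fix 1 ≤ K ≤ M. Then almost surely, limsup_{n→∞} sup_{θ ∈ Θ'_{n,K}} (1/n)·R_n(J(θ)) ≤ 3M·u·2c_0. -/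
/-!
Cover `[Lmin, Lmax]` by the finitely many grid intervals `[Lmin + (j - 1) c₀, Lmin + (j + 2) c₀)`
of length `3 c₀`. Each has probability at most `3 u c₀ < 4 u c₀` (`u > 0` since the density
integrates to `1`), so by the strong law of large numbers, almost surely, eventually at most a
fraction `4 u c₀` of the observations lies in any of them.
For `θ ∈ Θ'_{n,K}` each of the `K` short components has centre in `[Lmin, Lmax]` and half-width at
most `c₀`, so its support lies in a single grid interval: `J(θ)` is covered by at most `M` grid
intervals, uniformly in `n` and `θ`.
-/

open MeasureTheory ProbabilityTheory Filter Set
open scoped Classical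

/-- `Θ_n' = {θ ∈ Θ : L_min ≤ a_m ≤ L_max, c_n ≤ b_m ≤ L for all m, b_m ≤ c₀ for some m}`. -/
def thetaN' (M : ℕ) (Lmin Lmax L c₀ cn : ℝ) : Set (EuclideanSpace ℝ (Fin M × Fin 3)) :=
  {θ ∈ mixParams M |
    (∀ m : Fin M, Lmin ≤ θ (m, 1) ∧ θ (m, 1) ≤ Lmax ∧ cn ≤ θ (m, 2) ∧ θ (m, 2) ≤ L) ∧
    ∃ m : Fin M, θ (m, 2) ≤ c₀}

/-- `Θ'_{n,K} = {θ ∈ Θ_n' : b_1 ≤ … ≤ b_K ≤ c₀ < b_{K+1} ≤ … ≤ b_M}`. -/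
def thetaNK (M : ℕ) (Lmin Lmax L c₀ cn : ℝ) (K : ℕ) :
    Set (EuclideanSpace ℝ (Fin M × Fin 3)) :=
  {θ ∈ thetaN' M Lmin Lmax L c₀ cn |
    (Monotone fun m : Fin M => θ (m, 2)) ∧
    ∀ m : Fin M, ((m : ℕ) < K → θ (m, 2) ≤ c₀) ∧ (K ≤ (m : ℕ) → c₀ < θ (m, 2))}

/-- `J(θ)`: the support of `Σ_{m=1}^K α_m f_m(x; η_m)`. -/
noncomputable def shortSupport (M K : ℕ) (θ : EuclideanSpace ℝ (Fin M × Fin 3)) :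
    Set ℝ :=
  Function.support fun x =>
    ∑ m ∈ Finset.univ.filter (fun m : Fin M => (m : ℕ) < K),
      θ (m, 0) * unifPdf (θ (m, 1)) (θ (m, 2)) x

/-- `R_n(V)`: the number of the first `n` observations lying in `V`. -/
noncomputable def countIn {Ω : Type*} (X : ℕ → Ω → ℝ) (ω : Ω) (n : ℕ) (V : Set ℝ) : ℕ :=
  ((Finset.range n).filter fun i => X i ω ∈ V).card

open scoped Topology ENNReal

section countIn

variable {Ω : Type*} (X : ℕ → Ω → ℝ) (ω : Ω) (n : ℕ)

lemma countIn_eq_sum_indicator (V : Set ℝ) :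
    (countIn X ω n V : ℝ) = ∑ i ∈ Finset.range n, V.indicator 1 (X i ω) := by
  rw [countIn, Finset.card_filter, Nat.cast_sum]
  refine Finset.sum_congr rfl fun i _ => ?_
  by_cases h : X i ω ∈ V <;> simp [h]

lemma countIn_mono {V W : Set ℝ} (h : V ⊆ W) : countIn X ω n V ≤ countIn X ω n W :=
  Finset.card_le_card (Finset.monotone_filter_right _ fun _ _ hi => h hi)

lemma countIn_iUnion_le {ι : Type*} [Fintype ι] (V : ι → Set ℝ) :
    countIn X ω n (⋃ i, V i) ≤ ∑ i, countIn X ω n (V i) := by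
  have hfilter : (Finset.range n).filter (fun k => X k ω ∈ ⋃ i, V i)
      = Finset.univ.biUnion fun i => (Finset.range n).filter fun k => X k ω ∈ V i := by
    ext k
    simp
  rw [countIn, hfilter]
  exact Finset.card_biUnion_le

end countIn

theorem ae_tendsto_countIn_div {Ω : Type*} [MeasurableSpace Ω] {P : Measure Ω}
    [IsFiniteMeasure P] {X : ℕ → Ω → ℝ} (hX : ∀ i, AEMeasurable (X i) P)
    (hindep : Pairwise fun i j => IndepFun (X i) (X j) P) {μ : Measure ℝ}
    (hlaw : ∀ i, P.map (X i) = μ) {V : Set ℝ} (hV : MeasurableSet V) :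
    ∀ᵐ ω ∂P, Tendsto (fun n : ℕ => (countIn X ω n V : ℝ) / n) atTop (𝓝 (μ.real V)) := by
  have hg : Measurable (V.indicator (1 : ℝ → ℝ)) := measurable_one.indicator hV
  set Y : ℕ → Ω → ℝ := fun i ω => V.indicator 1 (X i ω)
  have hident : ∀ i, IdentDistrib (Y i) (Y 0) P P := fun i =>
    (IdentDistrib.mk (hX i) (hX 0) (by rw [hlaw i, hlaw 0])).comp hg
  have hint : Integrable (Y 0) P := by
    refine (integrable_const (1 : ℝ)).mono' (hg.comp_aemeasurable (hX 0)).aestronglyMeasurable ?_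
    filter_upwards with ω
    by_cases h : X 0 ω ∈ V <;> simp [Y, h]
  have hmean : P[Y 0] = μ.real V := by
    rw [← integral_indicator_one hV, ← hlaw 0, integral_map (hX 0) hg.aestronglyMeasurable]
  have hslln := strong_law_ae_real Y hint (fun i j hij => (hindep hij).comp hg hg) hident
  filter_upwards [hslln] with ω hω
  simpa only [countIn_eq_sum_indicator, hmean] using hω

section density

variable {α : Type*} [MeasurableSpace α] {ν : Measure α} {f : α → ℝ} {u : ℝ}

lemma pos_of_withDensity_ne_zero (hf : ∀ x, f x ≤ u)
    (hν : ν.withDensity (fun x => ENNReal.ofReal (f x)) ≠ 0) : 0 < u := by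
  by_contra! hu
  refine hν ?_
  have hzero : (fun x => ENNReal.ofReal (f x)) = 0 :=
    funext fun x => ENNReal.ofReal_of_nonpos ((hf x).trans hu)
  rw [hzero, withDensity_zero]

lemma measureReal_withDensity_le (hf : ∀ x, f x ≤ u) (hu : 0 ≤ u) {s : Set α}
    (hs : MeasurableSet s) (hνs : ν s ≠ ∞) :
    (ν.withDensity fun x => ENNReal.ofReal (f x)).real s ≤ u * ν.real s := by
  have hle : ν.withDensity (fun x => ENNReal.ofReal (f x)) s ≤ ENNReal.ofReal u * ν s := by
    rw [withDensity_apply _ hs, ← setLIntegral_const]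
    exact lintegral_mono fun x => ENNReal.ofReal_le_ofReal (hf x)
  calc _ ≤ (ENNReal.ofReal u * ν s).toReal :=
        ENNReal.toReal_mono (ENNReal.mul_ne_top ENNReal.ofReal_ne_top hνs) hle
    _ = u * ν.real s := by rw [ENNReal.toReal_mul, ENNReal.toReal_ofReal hu, measureReal_def]

end density

def gridInterval (x₀ h : ℝ) (j : ℕ) : Set ℝ :=
  Ico (x₀ + (j - 1) * h) (x₀ + (j + 2) * h)

lemma volume_real_gridInterval {x₀ h : ℝ} (hh : 0 ≤ h) (j : ℕ) :
    volume.real (gridInterval x₀ h j) = 3 * h := by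
  rw [gridInterval, Real.volume_real_Ico_of_le (by nlinarith)]
  ring

lemma Ico_subset_gridInterval {x₀ h a b : ℝ} (hh : 0 < h) (ha : x₀ ≤ a) (hb : b ≤ h) :
    Ico (a - b) (a + b) ⊆ gridInterval x₀ h ⌊(a - x₀) / h⌋₊ := by
  have hlow : (⌊(a - x₀) / h⌋₊ : ℝ) * h ≤ a - x₀ :=
    (le_div_iff₀ hh).1 (Nat.floor_le (div_nonneg (sub_nonneg.2 ha) hh.le))
  have hupp : a - x₀ < (⌊(a - x₀) / h⌋₊ + 1 : ℝ) * h :=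
    (div_lt_iff₀ hh).1 (Nat.lt_floor_add_one _)
  exact Ico_subset_Ico (by linarith) (by linarith)

lemma support_unifPdf_subset (a b : ℝ) : Function.support (unifPdf a b) ⊆ Ico (a - b) (a + b) :=
  fun _ hx => by_contra fun h => hx (if_neg h)

section shortSupport

variable {M K : ℕ} {Lmin Lmax L c₀ cn : ℝ} {θ : EuclideanSpace ℝ (Fin M × Fin 3)}

lemma shortSupport_subset_iUnion_gridInterval (hθ : θ ∈ thetaNK M Lmin Lmax L c₀ cn K)
    (hc₀ : 0 < c₀) :
    shortSupport M K θ ⊆ ⋃ m : Fin M, gridInterval Lmin c₀ ⌊(θ (m, 1) - Lmin) / c₀⌋₊ := by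
  obtain ⟨⟨-, hbox, -⟩, -, hsplit⟩ := hθ
  intro x hx
  obtain ⟨m, hm, hxm⟩ := mem_iUnion₂.1 (Finset.support_sum _ _ hx)
  have hb : θ (m, 2) ≤ c₀ := (hsplit m).1 (Finset.mem_filter.1 hm).2
  exact mem_iUnion.2 ⟨m, Ico_subset_gridInterval hc₀ (hbox m).1 hb
    (support_unifPdf_subset _ _ (Function.support_mul_subset_right _ _ hxm))⟩

lemma countIn_shortSupport_div_le {Ω : Type*} (X : ℕ → Ω → ℝ) (ω : Ω) (n : ℕ)
    (hθ : θ ∈ thetaNK M Lmin Lmax L c₀ cn K) (hc₀ : 0 < c₀) {B : ℝ}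
    (hB : ∀ j ≤ ⌊(Lmax - Lmin) / c₀⌋₊, (countIn X ω n (gridInterval Lmin c₀ j) : ℝ) / n ≤ B) :
    (countIn X ω n (shortSupport M K θ) : ℝ) / n ≤ M * B := by
  set j : Fin M → ℕ := fun m => ⌊(θ (m, 1) - Lmin) / c₀⌋₊
  have hj : ∀ m, j m ≤ ⌊(Lmax - Lmin) / c₀⌋₊ := fun m =>
    Nat.floor_le_floor (by gcongr; exact (hθ.1.2.1 m).2.1)
  have hcount :
      countIn X ω n (shortSupport M K θ) ≤ ∑ m, countIn X ω n (gridInterval Lmin c₀ (j m)) :=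
    (countIn_mono X ω n (shortSupport_subset_iUnion_gridInterval hθ hc₀)).trans
      (countIn_iUnion_le X ω n _)
  calc (countIn X ω n (shortSupport M K θ) : ℝ) / n
      ≤ (∑ m, (countIn X ω n (gridInterval Lmin c₀ (j m)) : ℝ)) / n := by
        gcongr
        exact_mod_cast hcount
    _ = ∑ m, (countIn X ω n (gridInterval Lmin c₀ (j m)) : ℝ) / n := Finset.sum_div _ _ _
    _ ≤ ∑ _m : Fin M, B := Finset.sum_le_sum fun m _ => hB _ (hj m)
    _ = M * B := by simp

end shortSupport

theorem limsup_sup_countIn_shortSupport_le_general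
    (M K : ℕ)
    (θ₀ : EuclideanSpace ℝ (Fin M × Fin 3))
    (Lmin Lmax L : ℝ)
    (u : ℝ) (hu : IsGreatest (Set.range (mixPdf M θ₀)) u)
    (c₀ d : ℝ) (hc₀ : 0 < c₀)
    {Ω : Type*} [MeasurableSpace Ω] (P : Measure Ω) [IsProbabilityMeasure P]
    (X : ℕ → Ω → ℝ) (hX : ∀ i, Measurable (X i))
    (hindep : iIndepFun X P)
    (hlaw : ∀ i, Measure.map (X i) P
      = volume.withDensity fun x => ENNReal.ofReal (mixPdf M θ₀ x)) :
    ∀ᵐ ω ∂P,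
      Filter.limsup (fun n : ℕ =>
          sSup {y : ℝ | ∃ θ ∈ thetaNK M Lmin Lmax L c₀
              (c₀ * Real.exp (-(n : ℝ) ^ d)) K,
            y = (countIn X ω n (shortSupport M K θ) : ℝ) / n})
        atTop
      ≤ 3 * M * u * (2 * c₀) := by
  set μ : Measure ℝ := volume.withDensity fun x => ENNReal.ofReal (mixPdf M θ₀ x)
  have hfu : ∀ x, mixPdf M θ₀ x ≤ u := fun x => hu.2 ⟨x, rfl⟩
  have : IsProbabilityMeasure μ := hlaw 0 ▸ Measure.isProbabilityMeasure_map (hX 0).aemeasurable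
  have hu0 : 0 < u := pos_of_withDensity_ne_zero hfu (IsProbabilityMeasure.ne_zero μ)
  have hgrid : ∀ j, μ.real (gridInterval Lmin c₀ j) < 4 * u * c₀ := fun j => calc
    _ ≤ u * volume.real (gridInterval Lmin c₀ j) :=
      measureReal_withDensity_le hfu hu0.le measurableSet_Ico measure_Ico_lt_top.ne
    _ = 3 * u * c₀ := by rw [volume_real_gridInterval hc₀.le]; ring
    _ < 4 * u * c₀ := by gcongr; norm_num
  have hslln := ae_all_iff.2 fun j : ℕ => ae_tendsto_countIn_div (fun i => (hX i).aemeasurable)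
    (fun i k hik => hindep.indepFun hik) hlaw (V := gridInterval Lmin c₀ j) measurableSet_Ico
  filter_upwards [hslln] with ω hω
  have hev : ∀ᶠ n : ℕ in atTop, ∀ j ∈ Iic ⌊(Lmax - Lmin) / c₀⌋₊,
      (countIn X ω n (gridInterval Lmin c₀ j) : ℝ) / n ≤ 4 * u * c₀ :=
    (eventually_all_finite (finite_Iic _)).2 fun j _ => (hω j).eventually_le_const (hgrid j)
  refine limsup_le_of_le (isCoboundedUnder_le_of_le atTop fun n => Real.sSup_nonneg ?_) ?_
  · rintro _ ⟨θ, -, rfl⟩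
    positivity
  filter_upwards [hev] with n hn
  refine Real.sSup_le ?_ (by positivity)
  rintro _ ⟨θ, hθ, rfl⟩
  calc _ ≤ M * (4 * u * c₀) := countIn_shortSupport_div_le X ω n hθ hc₀ hn
    _ ≤ 3 * M * u * (2 * c₀) := by
      linarith [mul_nonneg (mul_nonneg (Nat.cast_nonneg M : (0 : ℝ) ≤ M) hu0.le) hc₀.le]

/-- **Lemma (bound on the fraction of observations in `J(θ)`).** Almost surely,
`limsup_n sup_{θ ∈ Θ'_{n,K}} (1/n) R_n(J(θ)) ≤ 3M·u·2c₀`. -/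
theorem limsup_sup_countIn_shortSupport_le
    (M K : ℕ) (hM : 0 < M) (hK1 : 1 ≤ K) (hKM : K ≤ M)
    (θ₀ : EuclideanSpace ℝ (Fin M × Fin 3)) (hθ₀ : θ₀ ∈ mixParams M)
    (Lmin Lmax L : ℝ)
    (hLmin : IsLeast (Set.range fun m : Fin M => θ₀ (m, 1) - θ₀ (m, 2)) Lmin)
    (hLmax : IsGreatest (Set.range fun m : Fin M => θ₀ (m, 1) + θ₀ (m, 2)) Lmax)
    (hL : L = Lmax - Lmin)
    (u : ℝ) (hu : IsGreatest (Set.range (mixPdf M θ₀)) u)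
    (c₀ d : ℝ) (hc₀ : 0 < c₀) (hc₀e : 2 * c₀ < Real.exp (-1))
    (hd0 : 1 / 4 < d) (hd1 : d < 1)
    {Ω : Type*} [MeasurableSpace Ω] (P : Measure Ω) [IsProbabilityMeasure P]
    (X : ℕ → Ω → ℝ) (hX : ∀ i, Measurable (X i))
    (hindep : iIndepFun X P)
    (hlaw : ∀ i, Measure.map (X i) P
      = volume.withDensity fun x => ENNReal.ofReal (mixPdf M θ₀ x)) :
    ∀ᵐ ω ∂P,
      Filter.limsup (fun n : ℕ =>
          sSup {y : ℝ | ∃ θ ∈ thetaNK M Lmin Lmax L c₀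
              (c₀ * Real.exp (-(n : ℝ) ^ d)) K,
            y = (countIn X ω n (shortSupport M K θ) : ℝ) / n})
        atTop
      ≤ 3 * M * u * (2 * c₀) :=
  limsup_sup_countIn_shortSupport_le_general M K θ₀ Lmin Lmax L u hu c₀ d hc₀ P X hX hindep hlaw
end
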